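/- arXiv:1609.07204 — 5 statements merged into one kernel-verified Lean document; each statement's English description precedes it below -/
import Mathlib

section
/- Suppose $a_1, \ldots, a_n \in \mathbb{C} \setminus \Lambda$ satisfy $\wp(a_i) \neq \wp(a_j)$ for $i \neq j$. Then the system of equations $\sum_{j \neq i} \frac{\wp'(a_i) + \wp'(a_j)}{\wp(a_i) - \wp(a_j)} = 0$ for all $1 \le i \le n$ is equivalent to the system $\sum_{i=1}^n \wp'(a_i)\,\wp(a_i)^l = 0$ for all $0 \le l \le n-2$. -/
noncomputable section

/-- The lattice `ℤω₁ + ℤω₂` as a set of complex numbers. -/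
def latticePts (ω1 ω2 : ℂ) : Set ℂ :=
  {z | ∃ m n : ℤ, z = (m : ℂ) * ω1 + (n : ℂ) * ω2}

/-- A nonzero lattice point indexed by `(m, n) ∈ ℤ² \ {0}`. -/
def latPt (ω1 ω2 : ℂ) (p : ℤ × ℤ) : ℂ := (p.1 : ℂ) * ω1 + (p.2 : ℂ) * ω2

/-- The Weierstrass elliptic function `℘` of the lattice `ℤω₁ + ℤω₂`. -/
def wp (ω1 ω2 : ℂ) (z : ℂ) : ℂ :=
  1 / z ^ 2 + ∑' p : ℤ × ℤ,
    if p = 0 then 0 else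
      (1 / (z - latPt ω1 ω2 p) ^ 2 - 1 / (latPt ω1 ω2 p) ^ 2)

/-- The Weierstrass zeta function `ζ` of the lattice `ℤω₁ + ℤω₂`. -/
def wzeta (ω1 ω2 : ℂ) (z : ℂ) : ℂ :=
  1 / z + ∑' p : ℤ × ℤ,
    if p = 0 then 0 else
      (1 / (z - latPt ω1 ω2 p) + 1 / latPt ω1 ω2 p + z / (latPt ω1 ω2 p) ^ 2)

/-- The derivative `℘'`. -/
def wp' (ω1 ω2 : ℂ) : ℂ → ℂ := deriv (wp ω1 ω2)

/-- The second derivative `℘''`. -/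
def wp'' (ω1 ω2 : ℂ) : ℂ → ℂ := deriv (deriv (wp ω1 ω2))

/-- The invariant `g₂ = 60 ∑_{ω ≠ 0} ω⁻⁴`. -/
def g2 (ω1 ω2 : ℂ) : ℂ :=
  60 * ∑' p : ℤ × ℤ, if p = 0 then 0 else 1 / (latPt ω1 ω2 p) ^ 4

end

/-!
Write `x i = ℘(a i)` and `y i = ℘'(a i)`, and let `P = ∑ⱼ y j ∏_{k ≠ j} (X - x k)`, a
polynomial of degree `< n`. At a node, `P'(x i)` is `∏_{k ≠ i} (x i - x k)` times the `i`-th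
balance sum, so the balance system says that `P'` has `n` roots, i.e. `P` is a constant `c`,
i.e. `y = c • w` for the nodal weights `w i = ∏_{k ≠ i} (x i - x k)⁻¹`. Since
`∑ᵢ w i * x i ^ l` is the coefficient of `X ^ (n - 1)` in the interpolant of `X ^ l`, it is `0`
for `l ≤ n - 2` and `1` for `l = n - 1`; with the invertibility of the Vandermonde matrix this
shows that the moment system also says `y = c • w`.
-/

open Finset Polynomial Lagrange

section

variable {F ι : Type*} [Field F] [DecidableEq ι] {s : Finset ι} {x : ι → F}

theorem sum_pow_mul_nodalWeight (hx : Set.InjOn x s) {l : ℕ} (hl : l < #s) :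
    ∑ i ∈ s, x i ^ l * nodalWeight s x i = if l = #s - 1 then 1 else 0 := by
  have hdeg : (X ^ l : F[X]).degree < #s := by rw [degree_X_pow]; exact_mod_cast hl
  have h := coeff_eq_sum hx hdeg
  simp only [coeff_X_pow, eval_pow, eval_X, div_eq_mul_inv, ← prod_inv_distrib] at h
  simp only [nodalWeight, ← h]
  exact if_congr eq_comm rfl rfl

theorem eval_nodal_erase_erase (hx : Set.InjOn x s) {i j : ι} (hi : i ∈ s) (hj : j ∈ s.erase i) :
    (nodal ((s.erase i).erase j) x).eval (x i)
      = (nodal (s.erase i) x).eval (x i) / (x i - x j) := by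
  have hne : x i - x j ≠ 0 :=
    sub_ne_zero.mpr fun h => (mem_erase.mp hj).1 (hx (mem_of_mem_erase hj) hi h.symm)
  rw [nodal_eq_mul_nodal_erase hj, eval_mul, eval_sub, eval_X, eval_C, mul_div_cancel_left₀ _ hne]

theorem eval_sum_C_mul_nodal_erase (y : ι → F) {i : ι} (hi : i ∈ s) :
    (∑ j ∈ s, C (y j) * nodal (s.erase j) x).eval (x i)
      = y i * (nodal (s.erase i) x).eval (x i) := by
  rw [eval_finsetSum, ← add_sum_erase _ _ hi, eval_mul, eval_C, add_eq_left]
  refine sum_eq_zero fun j hj => ?_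
  rw [eval_mul, eval_nodal_at_node (mem_erase.mpr ⟨(mem_erase.mp hj).1.symm, hi⟩), mul_zero]

theorem eval_derivative_sum_C_mul_nodal_erase (hx : Set.InjOn x s) (y : ι → F) {i : ι}
    (hi : i ∈ s) :
    (derivative (∑ j ∈ s, C (y j) * nodal (s.erase j) x)).eval (x i)
      = (nodal (s.erase i) x).eval (x i) * ∑ j ∈ s.erase i, (y i + y j) / (x i - x j) := by
  have hother : ∀ j ∈ s.erase i, (derivative (nodal (s.erase j) x)).eval (x i)
      = (nodal ((s.erase i).erase j) x).eval (x i) := fun j hj => by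
    rw [eval_nodal_derivative_eval_node_eq (mem_erase.mpr ⟨(mem_erase.mp hj).1.symm, hi⟩),
      erase_right_comm]
  rw [derivative_sum, eval_finsetSum, ← add_sum_erase _ _ hi]
  simp only [derivative_C_mul, eval_mul, eval_C]
  rw [derivative_nodal, eval_finsetSum, mul_sum, mul_sum, ← sum_add_distrib]
  refine sum_congr rfl fun j hj => ?_
  rw [hother j hj, eval_nodal_erase_erase hx hi hj]
  ring

theorem degree_sum_C_mul_nodal_erase_lt (y : ι → F) :
    (∑ j ∈ s, C (y j) * nodal (s.erase j) x).degree < #s := by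
  rw [← mem_degreeLT]
  refine Submodule.sum_mem _ fun j hj => ?_
  rw [mem_degreeLT, C_mul']
  calc (y j • nodal (s.erase j) x).degree ≤ (nodal (s.erase j) x).degree := degree_smul_le _ _
    _ < #s := by
      rw [degree_nodal, card_erase_of_mem hj]
      exact_mod_cast Nat.sub_lt (card_pos.mpr ⟨j, hj⟩) one_pos

omit [DecidableEq ι] in
theorem forall_eval_derivative_eq_zero_iff [CharZero F] (hx : Set.InjOn x s) {P : F[X]}
    (hP : P.degree < #s) :
    (∀ i ∈ s, (derivative P).eval (x i) = 0) ↔ ∃ c, ∀ i ∈ s, P.eval (x i) = c := by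
  constructor
  · intro h
    have hP' : derivative P = 0 :=
      eq_zero_of_degree_lt_of_eval_index_eq_zero s hx (degree_derivative_le.trans_lt hP) h
    exact ⟨P.coeff 0, fun i _ => by rw [eq_C_of_derivative_eq_zero hP', eval_C, coeff_C_zero]⟩
  · rintro ⟨c, hc⟩ i hi
    have hC : P = C c := eq_of_degrees_lt_of_eval_index_eq s hx hP
      (degree_C_le.trans_lt (by exact_mod_cast card_pos.mpr ⟨i, hi⟩))
      fun j hj => by rw [hc j hj, eval_C]
    rw [hC, derivative_C, eval_zero]

theorem balance_iff_exists_eq_mul_nodalWeight [CharZero F] (hx : Set.InjOn x s) (y : ι → F) :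
    (∀ i ∈ s, ∑ j ∈ s.erase i, (y i + y j) / (x i - x j) = 0)
      ↔ ∃ c, ∀ i ∈ s, y i = c * nodalWeight s x i := by
  let P := ∑ j ∈ s, C (y j) * nodal (s.erase j) x
  have hN : ∀ i ∈ s, (nodal (s.erase i) x).eval (x i) ≠ 0 := fun i hi h =>
    nodalWeight_ne_zero hx hi (by rw [nodalWeight_eq_eval_nodal_erase_inv, h, inv_zero])
  calc (∀ i ∈ s, ∑ j ∈ s.erase i, (y i + y j) / (x i - x j) = 0)
      ↔ ∀ i ∈ s, (derivative P).eval (x i) = 0 := forall₂_congr fun i hi => by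
        rw [eval_derivative_sum_C_mul_nodal_erase hx y hi, mul_eq_zero, or_iff_right (hN i hi)]
    _ ↔ ∃ c, ∀ i ∈ s, P.eval (x i) = c :=
        forall_eval_derivative_eq_zero_iff hx (degree_sum_C_mul_nodal_erase_lt y)
    _ ↔ ∃ c, ∀ i ∈ s, y i = c * nodalWeight s x i := exists_congr fun c => forall₂_congr
        fun i hi => by
          rw [eval_sum_C_mul_nodal_erase y hi, nodalWeight_eq_eval_nodal_erase_inv,
            eq_mul_inv_iff_mul_eq₀ (hN i hi)]

end

theorem moments_eq_zero_iff_exists_eq_mul_nodalWeight {F : Type*} [Field F] {n : ℕ}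
    {x : Fin n → F} (hx : Function.Injective x) (y : Fin n → F) :
    (∀ l : ℕ, l + 2 ≤ n → ∑ i, y i * x i ^ l = 0)
      ↔ ∃ c, ∀ i, y i = c * nodalWeight univ x i := by
  have hw : ∀ l < n, ∑ i, x i ^ l * nodalWeight univ x i = if l = n - 1 then 1 else 0 :=
    fun l hl => by simpa using sum_pow_mul_nodalWeight hx.injOn (s := univ) (by simpa using hl)
  constructor
  · intro h
    set c := ∑ i, y i * x i ^ (n - 1)
    have hv := Matrix.eq_zero_of_forall_pow_sum_mul_pow_eq_zero hx
      (v := fun i => y i - c * nodalWeight univ x i) fun l => by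
        simp only [sub_mul, sum_sub_distrib, mul_assoc, ← mul_sum, mul_comm (nodalWeight _ _ _)]
        rw [hw l l.isLt]
        split_ifs with hl
        · rw [hl, mul_one]
          exact sub_self c
        · rw [h l (by omega), mul_zero, sub_zero]
    exact ⟨c, fun i => sub_eq_zero.mp (congrFun hv i)⟩
  · rintro ⟨c, hc⟩ l hl
    simp only [hc, mul_assoc, ← mul_sum, mul_comm (nodalWeight _ _ _)]
    rw [hw l (by omega), if_neg (by omega), mul_zero]

open Finset in
theorem balance_iff_moments_general (ω1 ω2 : ℂ)
    (n : ℕ) (a : Fin n → ℂ)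
    (hdist : ∀ i j, i ≠ j → wp ω1 ω2 (a i) ≠ wp ω1 ω2 (a j)) :
    (∀ i, ∑ j ∈ univ.erase i,
        (wp' ω1 ω2 (a i) + wp' ω1 ω2 (a j)) / (wp ω1 ω2 (a i) - wp ω1 ω2 (a j)) = 0)
      ↔ (∀ l : ℕ, l + 2 ≤ n → ∑ i, wp' ω1 ω2 (a i) * wp ω1 ω2 (a i) ^ l = 0) := by
  have hx : Function.Injective fun i => wp ω1 ω2 (a i) := fun i j h =>
    by_contra fun hij => hdist i j hij h
  have hbal := balance_iff_exists_eq_mul_nodalWeight hx.injOn (s := univ)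
    fun i => wp' ω1 ω2 (a i)
  simp only [mem_univ, forall_const] at hbal
  exact hbal.trans (moments_eq_zero_iff_exists_eq_mul_nodalWeight hx _).symm

open Finset in
/-- Equivalence of the balance system and the moment system
(Proposition 5.8.3 of \[CLW\]). -/
theorem balance_iff_moments (ω1 ω2 : ℂ) (hτ : 0 < (ω2 / ω1).im)
    (n : ℕ) (hn : 2 ≤ n) (a : Fin n → ℂ)
    (ha : ∀ i, a i ∉ latticePts ω1 ω2)
    (hdist : ∀ i j, i ≠ j → wp ω1 ω2 (a i) ≠ wp ω1 ω2 (a j)) :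
    (∀ i, ∑ j ∈ univ.erase i,
        (wp' ω1 ω2 (a i) + wp' ω1 ω2 (a j)) / (wp ω1 ω2 (a i) - wp ω1 ω2 (a j)) = 0)
      ↔ (∀ l : ℕ, l + 2 ≤ n → ∑ i, wp' ω1 ω2 (a i) * wp ω1 ω2 (a i) ^ l = 0) :=
  balance_iff_moments_general ω1 ω2 n a hdist
end

section
/- Suppose $a_1, \ldots, a_n \in \mathbb{C} \setminus \Lambda$ have pairwise distinct $\wp$-values and satisfy $\sum_{i=1}^n \wp'(a_i) \wp(a_i)^l = 0$ for $0 \le l \le n-2$. Then the quantity $C(a) := \wp'(a_i) \prod_{j \neq i} (\wp(a_i) - \wp(a_j))$ is independent of the choice of $i \in \{1, \ldots, n\}$. -/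
/-!
Only the values `xᵢ = ℘(aᵢ)` and `yᵢ = ℘'(aᵢ)` matter. The moment conditions say that `y` is
orthogonal to `1, x, …, x^(n-2)`, i.e. lies in the kernel of an `(n-1) × n` Vandermonde matrix,
which is a line since the `xᵢ` are distinct. The Lagrange weights `1 / ∏_{j ≠ i} (xᵢ - xⱼ)` span it
(they are the divided differences of `x^l`, which vanish for `l < n - 1`), so `y` is a multiple
`c` of them and `yᵢ ∏_{j ≠ i} (xᵢ - xⱼ) = c` for every `i`; pairing with `x^(n-1)` identifies
`c = ∑ⱼ yⱼ xⱼ^(n-1)`.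
-/

open Finset Polynomial

theorem Lagrange.sum_pow_div_prod_sub {F ι : Type*} [Field F] [DecidableEq ι] {s : Finset ι}
    {v : ι → F} (hvs : Set.InjOn v s) {l : ℕ} (hl : l < #s) :
    ∑ i ∈ s, v i ^ l / ∏ j ∈ s.erase i, (v i - v j) = if l = #s - 1 then 1 else 0 := by
  have hdeg : (X ^ l : F[X]).degree < #s := by rw [degree_X_pow]; exact_mod_cast hl
  simpa [coeff_X_pow, eq_comm] using (Lagrange.coeff_eq_sum hvs hdeg).symm

section MomentConditions

variable {F : Type*} [Field F] {n : ℕ} {x y : Fin n → F}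

theorem eq_div_prod_sub_of_sum_mul_pow_eq_zero (hx : Function.Injective x)
    (hy : ∀ l : ℕ, l + 2 ≤ n → ∑ i, y i * x i ^ l = 0) (i : Fin n) :
    y i = (∑ j, y j * x j ^ (n - 1)) / ∏ j ∈ univ.erase i, (x i - x j) := by
  set c := ∑ j, y j * x j ^ (n - 1)
  suffices h : (fun i => y i - c / ∏ j ∈ univ.erase i, (x i - x j)) = 0 from
    sub_eq_zero.1 (congrFun h i)
  refine Matrix.eq_zero_of_forall_pow_sum_mul_pow_eq_zero hx fun l => ?_
  have hdivDiff := Lagrange.sum_pow_div_prod_sub hx.injOn (s := univ) (l := l) (by simp)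
  simp only [card_univ, Fintype.card_fin] at hdivDiff
  simp only [sub_mul, sum_sub_distrib, div_mul_eq_mul_div, mul_div_assoc, ← mul_sum, hdivDiff]
  split_ifs with hl
  · rw [hl, mul_one, sub_self]
  · rw [hy l (by omega), mul_zero, sub_zero]

theorem mul_prod_sub_eq_sum_mul_pow (hx : Function.Injective x)
    (hy : ∀ l : ℕ, l + 2 ≤ n → ∑ i, y i * x i ^ l = 0) (i : Fin n) :
    y i * ∏ j ∈ univ.erase i, (x i - x j) = ∑ j, y j * x j ^ (n - 1) := by
  have hprod : ∏ j ∈ univ.erase i, (x i - x j) ≠ 0 :=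
    prod_ne_zero_iff.2 fun j hj => sub_ne_zero.2 fun h => ne_of_mem_erase hj (hx h).symm
  rw [eq_div_prod_sub_of_sum_mul_pow_eq_zero hx hy i, div_mul_cancel₀ _ hprod]

end MomentConditions

open Finset in
theorem Ca_independent_general (ω1 ω2 : ℂ)
    (n : ℕ) (a : Fin n → ℂ)
    (hdist : ∀ i j, i ≠ j → wp ω1 ω2 (a i) ≠ wp ω1 ω2 (a j))
    (hmom : ∀ l : ℕ, l + 2 ≤ n → ∑ i, wp' ω1 ω2 (a i) * wp ω1 ω2 (a i) ^ l = 0) :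
    ∀ i k : Fin n,
      wp' ω1 ω2 (a i) * ∏ j ∈ univ.erase i, (wp ω1 ω2 (a i) - wp ω1 ω2 (a j)) =
      wp' ω1 ω2 (a k) * ∏ j ∈ univ.erase k, (wp ω1 ω2 (a k) - wp ω1 ω2 (a j)) := by
  have hinj : Function.Injective fun i => wp ω1 ω2 (a i) :=
    fun i j h => not_imp_not.1 (hdist i j) h
  intro i k
  rw [mul_prod_sub_eq_sum_mul_pow hinj hmom i, mul_prod_sub_eq_sum_mul_pow hinj hmom k]

open Finset in
/-- Under the moment conditions, `C(a) = ℘'(aᵢ) ∏_{j ≠ i} (℘(aᵢ) - ℘(aⱼ))` is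
independent of the choice of `i`. -/
theorem Ca_independent (ω1 ω2 : ℂ) (hτ : 0 < (ω2 / ω1).im)
    (n : ℕ) (a : Fin n → ℂ)
    (ha : ∀ i, a i ∉ latticePts ω1 ω2)
    (hdist : ∀ i j, i ≠ j → wp ω1 ω2 (a i) ≠ wp ω1 ω2 (a j))
    (hmom : ∀ l : ℕ, l + 2 ≤ n → ∑ i, wp' ω1 ω2 (a i) * wp ω1 ω2 (a i) ^ l = 0) :
    ∀ i k : Fin n,
      wp' ω1 ω2 (a i) * ∏ j ∈ univ.erase i, (wp ω1 ω2 (a i) - wp ω1 ω2 (a j)) =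
      wp' ω1 ω2 (a k) * ∏ j ∈ univ.erase k, (wp ω1 ω2 (a k) - wp ω1 ω2 (a j)) :=
  Ca_independent_general ω1 ω2 n a hdist hmom
end

section
/- Let $f(z) = -\frac{c}{z - p} + h(z)$ near $p \in \mathbb{C}$, where $c \in \mathbb{C}$ and $h$ is holomorphic in a neighborhood of $p$. Write $f = u + iv$. Then $-\int_{|z-p|=r} u\, dv = \frac{\pi |c|^2}{r^2} + O(r)$ as $r \to 0$. -/
/-!
With `F θ = f (p + r e^{iθ})`, the pointwise identity
`Re F · Im F' = (Im (F F') + Im (conj F · F')) / 2` and the periodicity of `F² / 2` give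
`∫ u dv = ½ Im ∮ conj f · f' dz`. On the circle `conj (z - p) = r² / (z - p)`, so `conj f · f'`
splits into `-|c|² / (r² (z - p))`, which contributes `-2πi |c|² / r²`, two terms whose integrals
vanish by Cauchy's theorem (one of them after conjugation), and `conj h · h'`, whose integral is
`O(r)` because `h` and `h'` are bounded near `p`.
-/

open Complex Real MeasureTheory Metric
open scoped ComplexConjugate

theorem integral_re_mul_im_eq_half_im_integral_conj_mul {F F' : ℝ → ℂ} {a b : ℝ}
    (hF : ∀ t ∈ Set.uIcc a b, HasDerivAt F (F' t) t) (hF' : IntervalIntegrable F' volume a b)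
    (hab : F a = F b) :
    ∫ t in a..b, (F t).re * (F' t).im = (∫ t in a..b, conj (F t) * F' t).im / 2 := by
  have hFc : ContinuousOn F (Set.uIcc a b) := fun t ht => (hF t ht).continuousAt.continuousWithinAt
  have hFF' : IntervalIntegrable (fun t => F t * F' t) volume a b := hF'.continuousOn_mul hFc
  have hcFF' : IntervalIntegrable (fun t => conj (F t) * F' t) volume a b :=
    hF'.continuousOn_mul (continuous_conj.comp_continuousOn hFc)
  have hexact : ∫ t in a..b, F t * F' t = 0 := by
    have hsq : ∀ t ∈ Set.uIcc a b, HasDerivAt (fun t => F t * F t / 2) (F t * F' t) t :=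
      fun t ht => (((hF t ht).mul (hF t ht)).div_const 2).congr_deriv (by ring)
    rw [intervalIntegral.integral_eq_sub_of_hasDerivAt hsq hFF', hab, sub_self]
  calc ∫ t in a..b, (F t).re * (F' t).im
      = ∫ t in a..b, ((F t * F' t + conj (F t) * F' t) / 2).im := by
        congr 1; ext t
        simp only [div_ofNat_im, add_im, mul_im, conj_re, conj_im]
        ring
    _ = (((∫ t in a..b, F t * F' t) + ∫ t in a..b, conj (F t) * F' t) / 2).im := by
        rw [← intervalIntegral.integral_add hFF' hcFF', ← intervalIntegral.integral_div]
        exact intervalIntegral.intervalIntegral_im ((hFF'.add hcFF').div_const 2)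
    _ = (∫ t in a..b, conj (F t) * F' t).im / 2 := by simp [hexact]

theorem integral_re_mul_deriv_im_comp_circleMap {f f' : ℂ → ℂ} {p : ℂ} {r : ℝ}
    (hf : ∀ z ∈ sphere p |r|, HasDerivAt f (f' z) z) (hf' : ContinuousOn f' (sphere p |r|)) :
    ∫ θ in 0..2 * π, (f (circleMap p r θ)).re * deriv (fun t => (f (circleMap p r t)).im) θ
      = (∮ z in C(p, r), conj (f z) * f' z).im / 2 := by
  set F' : ℝ → ℂ := fun θ => f' (circleMap p r θ) * (circleMap 0 r θ * I)
  have hF : ∀ θ, HasDerivAt (fun t => f (circleMap p r t)) (F' θ) θ := fun θ =>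
    (hf _ (circleMap_mem_sphere' p r θ)).comp θ (hasDerivAt_circleMap p r θ)
  have hF'c : Continuous F' :=
    (hf'.comp_continuous (continuous_circleMap p r) (circleMap_mem_sphere' p r)).mul
      ((continuous_circleMap 0 r).mul continuous_const)
  have hper : f (circleMap p r 0) = f (circleMap p r (2 * π)) := by
    rw [← zero_add (2 * π), periodic_circleMap]
  calc ∫ θ in 0..2 * π, (f (circleMap p r θ)).re * deriv (fun t => (f (circleMap p r t)).im) θ
      = ∫ θ in 0..2 * π, (f (circleMap p r θ)).re * (F' θ).im := by
        congr 1; ext θ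
        have him : HasDerivAt (fun t => (f (circleMap p r t)).im) (F' θ).im θ :=
          imCLM.hasFDerivAt.comp_hasDerivAt θ (hF θ)
        rw [him.deriv]
    _ = (∮ z in C(p, r), conj (f z) * f' z).im / 2 := by
        rw [integral_re_mul_im_eq_half_im_integral_conj_mul (fun θ _ => hF θ)
          (hF'c.intervalIntegrable _ _) hper, circleIntegral]
        congr 3; ext θ
        simp only [F', deriv_circleMap, smul_eq_mul]
        ring

theorem conj_eq_norm_sq_div (w : ℂ) : conj w = ((‖w‖ ^ 2 : ℝ) : ℂ) / w := by
  rcases eq_or_ne w 0 with rfl | hw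
  · simp
  · rw [eq_div_iff hw, ← normSq_eq_conj_mul_self, normSq_eq_norm_sq]

theorem circleIntegral_conj_div_sub_sq (g : ℂ → ℂ) (p : ℂ) {r : ℝ} (hr : r ≠ 0) :
    ∮ z in C(p, r), conj (g z) / (z - p) ^ 2 = -conj (∮ z in C(p, r), g z) / r ^ 2 := by
  simp only [circleIntegral, ← intervalIntegral.intervalIntegral_conj]
  rw [← intervalIntegral.integral_neg, ← intervalIntegral.integral_div]
  congr 1; ext θ
  have hw := circleMap_ne_center (c := 0) hr (θ := θ)
  simp only [deriv_circleMap, circleMap_sub_center, smul_eq_mul, map_mul, conj_I,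
    conj_eq_norm_sq_div (circleMap 0 r θ), norm_circleMap_zero, sq_abs]
  have : (r : ℂ) ≠ 0 := by exact_mod_cast hr
  field_simp
  push_cast
  ring

theorem hasDerivAt_neg_div_sub_add {c p z : ℂ} {h : ℂ → ℂ} (hz : z ≠ p)
    (hh : DifferentiableAt ℂ h z) :
    HasDerivAt (fun w => -c / (w - p) + h w) (c / (z - p) ^ 2 + deriv h z) z :=
  (((hasDerivAt_const z (-c)).div ((hasDerivAt_id' z).sub_const p) (sub_ne_zero.2 hz)).add
    hh.hasDerivAt).congr_deriv (by ring)

theorem circleIntegral_conj_mul_deriv_simple_pole {p c : ℂ} {h : ℂ → ℂ} {U : Set ℂ} {r : ℝ}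
    (hr : 0 < r) (hU : IsOpen U) (hh : DifferentiableOn ℂ h U) (hrU : closedBall p r ⊆ U) :
    ∮ z in C(p, r), conj (-c / (z - p) + h z) * (c / (z - p) ^ 2 + deriv h z)
      = -(2 * π * I * ‖c‖ ^ 2 / r ^ 2) + ∮ z in C(p, r), conj (h z) * deriv h z := by
  have hh' : DifferentiableOn ℂ (deriv h) U := hh.deriv hU
  have hsU : sphere p r ⊆ U := sphere_subset_closedBall.trans hrU
  have hne : ∀ z ∈ sphere p r, z - p ≠ 0 := fun z hz =>
    sub_ne_zero.2 (ne_of_mem_sphere hz hr.ne')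
  have hr' : (r : ℂ) ≠ 0 := by exact_mod_cast hr.ne'
  have hsplit : Set.EqOn (fun z => conj (-c / (z - p) + h z) * (c / (z - p) ^ 2 + deriv h z))
      (fun z => -(‖c‖ ^ 2 / r ^ 2 : ℂ) * (z - p)⁻¹ + -conj c / r ^ 2 * ((z - p) * deriv h z)
        + c * (conj (h z) / (z - p) ^ 2) + conj (h z) * deriv h z) (sphere p r) := by
    intro z hz
    have hz' := hne z hz
    simp only [map_add, map_div₀, map_neg, conj_eq_norm_sq_div (z - p), mem_sphere_iff_norm.1 hz]
    rw [← mul_conj']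
    field_simp
    push_cast
    ring
  have hinv : ContinuousOn (fun z => (z - p)⁻¹) (sphere p r) :=
    (continuousOn_id.sub continuousOn_const).inv₀ hne
  have hhc : ContinuousOn h (sphere p r) := hh.continuousOn.mono hsU
  have hh'c : ContinuousOn (deriv h) (sphere p r) := hh'.continuousOn.mono hsU
  have hconjc : ContinuousOn (fun z => conj (h z)) (sphere p r) :=
    continuous_conj.comp_continuousOn hhc
  have hA : CircleIntegrable (fun z => -(‖c‖ ^ 2 / r ^ 2 : ℂ) * (z - p)⁻¹) p r :=
    (continuousOn_const.mul hinv).circleIntegrable hr.le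
  have hB : CircleIntegrable (fun z => -conj c / r ^ 2 * ((z - p) * deriv h z)) p r :=
    (continuousOn_const.mul ((continuousOn_id.sub continuousOn_const).mul hh'c)).circleIntegrable
      hr.le
  have hC : CircleIntegrable (fun z => c * (conj (h z) / (z - p) ^ 2)) p r :=
    (continuousOn_const.mul (hconjc.div ((continuousOn_id.sub continuousOn_const).pow 2)
      fun z hz => pow_ne_zero 2 (hne z hz))).circleIntegrable hr.le
  have hD : CircleIntegrable (fun z => conj (h z) * deriv h z) p r :=
    (hconjc.mul hh'c).circleIntegrable hr.le
  have hCauchy : ∀ g : ℂ → ℂ, DifferentiableOn ℂ g U → ∮ z in C(p, r), g z = 0 := fun g hg =>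
    (hg.diffContOnCl_ball hrU).circleIntegral_eq_zero hr.le
  rw [circleIntegral.integral_congr hr.le hsplit, circleIntegral.integral_add ?_ hD,
    circleIntegral.integral_add ?_ hC, circleIntegral.integral_add hA hB,
    circleIntegral.integral_const_mul, circleIntegral.integral_const_mul,
    circleIntegral.integral_const_mul, circleIntegral.integral_sub_center_inv p hr.ne',
    circleIntegral_conj_div_sub_sq h p hr.ne', hCauchy h hh, map_zero,
    hCauchy (fun z => (z - p) * deriv h z) ((differentiableOn_id.sub_const p).mul hh')]
  · field_simp
    ring
  · exact hA.add hB
  · exact (hA.add hB).add hC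

theorem integral_re_mul_deriv_im_simple_pole {p c : ℂ} {h : ℂ → ℂ} {U : Set ℂ} {r : ℝ}
    (hr : 0 < r) (hU : IsOpen U) (hh : DifferentiableOn ℂ h U) (hrU : closedBall p r ⊆ U) :
    ∫ θ in 0..2 * π, (-c / (circleMap p r θ - p) + h (circleMap p r θ)).re *
        deriv (fun t => (-c / (circleMap p r t - p) + h (circleMap p r t)).im) θ
      = -(π * ‖c‖ ^ 2 / r ^ 2) + (∮ z in C(p, r), conj (h z) * deriv h z).im / 2 := by
  have hsU : sphere p |r| ⊆ U := by
    rw [abs_of_pos hr]; exact sphere_subset_closedBall.trans hrU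
  have hne : ∀ z ∈ sphere p |r|, z ≠ p := fun z hz => ne_of_mem_sphere hz (abs_pos.2 hr.ne').ne'
  have hf' : ContinuousOn (fun z => c / (z - p) ^ 2 + deriv h z) (sphere p |r|) :=
    (continuousOn_const.div ((continuousOn_id.sub continuousOn_const).pow 2) fun z hz =>
      pow_ne_zero 2 (sub_ne_zero.2 (hne z hz))).add ((hh.deriv hU).continuousOn.mono hsU)
  rw [integral_re_mul_deriv_im_comp_circleMap (f := fun z => -c / (z - p) + h z)
      (fun z hz => hasDerivAt_neg_div_sub_add (hne z hz)
        (hh.differentiableAt (hU.mem_nhds (hsU hz)))) hf',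
    circleIntegral_conj_mul_deriv_simple_pole hr hU hh hrU]
  have hpole : (2 * π * I * ‖c‖ ^ 2 / r ^ 2 : ℂ) = ((2 * π * ‖c‖ ^ 2 / r ^ 2 : ℝ) : ℂ) * I := by
    push_cast; ring
  rw [hpole, add_im, neg_im, mul_I_im, ofReal_re]
  ring

theorem norm_circleIntegral_conj_mul_le {g k : ℂ → ℂ} {p : ℂ} {r A B : ℝ} (hr : 0 ≤ r)
    (hA : 0 ≤ A) (hg : ∀ z ∈ sphere p r, ‖g z‖ ≤ A) (hk : ∀ z ∈ sphere p r, ‖k z‖ ≤ B) :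
    ‖∮ z in C(p, r), conj (g z) * k z‖ ≤ 2 * π * r * (A * B) :=
  circleIntegral.norm_integral_le_of_norm_le_const hr fun z hz => by
    rw [norm_mul, RCLike.norm_conj]
    exact mul_le_mul (hg z hz) (hk z hz) (norm_nonneg _) hA

open Complex Real in
/-- For `f(z) = -c/(z - p) + h(z)` with `h` holomorphic near `p`, writing
`f = u + iv`, the boundary term `-∫_{|z-p|=r} u dv` equals
`π|c|²/r² + O(r)` as `r → 0`. -/
theorem boundary_term_asymptotics (p c : ℂ) (R : ℝ) (hR : 0 < R) (h : ℂ → ℂ)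
    (hh : DifferentiableOn ℂ h (Metric.ball p R)) :
    ∃ M r₀ : ℝ, 0 < r₀ ∧ ∀ r : ℝ, 0 < r → r < r₀ →
      |(-(∫ θ in (0:ℝ)..(2 * π),
            (-c / (circleMap p r θ - p) + h (circleMap p r θ)).re *
              deriv (fun t : ℝ =>
                (-c / (circleMap p r t - p) + h (circleMap p r t)).im) θ))
          - π * ‖c‖ ^ 2 / r ^ 2| ≤ M * r := by
  have hK : closedBall p (R / 2) ⊆ ball p R := closedBall_subset_ball (by linarith)
  obtain ⟨M₁, hM₁⟩ := (isCompact_closedBall p (R / 2)).exists_bound_of_continuousOn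
    (hh.continuousOn.mono hK)
  obtain ⟨M₂, hM₂⟩ := (isCompact_closedBall p (R / 2)).exists_bound_of_continuousOn
    ((hh.deriv isOpen_ball).continuousOn.mono hK)
  have hM₁0 : 0 ≤ M₁ := (norm_nonneg _).trans (hM₁ p (mem_closedBall_self (by positivity)))
  refine ⟨π * M₁ * M₂, R / 2, by positivity, fun r hr hrR => ?_⟩
  have hrK : closedBall p r ⊆ closedBall p (R / 2) := closedBall_subset_closedBall hrR.le
  have hsK : sphere p r ⊆ closedBall p (R / 2) := sphere_subset_closedBall.trans hrK
  have hE := norm_circleIntegral_conj_mul_le hr.le hM₁0 (fun z hz => hM₁ z (hsK hz))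
    (fun z hz => hM₂ z (hsK hz))
  rw [integral_re_mul_deriv_im_simple_pole hr isOpen_ball hh (hrK.trans hK)]
  set E := ∮ z in C(p, r), conj (h z) * deriv h z
  calc |-(-(π * ‖c‖ ^ 2 / r ^ 2) + E.im / 2) - π * ‖c‖ ^ 2 / r ^ 2|
      = |E.im| / 2 := by rw [← abs_neg, ← abs_two, ← abs_div]; ring_nf
    _ ≤ ‖E‖ / 2 := by gcongr; exact abs_im_le_norm E
    _ ≤ π * M₁ * M₂ * r := by linarith
end

section
/- Let $L: \mathbb{C} \to \mathbb{C}$ be holomorphic outside a finite set, and suppose $L(z + \omega_1) - L(z) = \chi_1$ and $L(z + \omega_2) - L(z) = \chi_2$ for constants $\chi_1, \chi_2$, where $\omega_1, \omega_2$ span a lattice. If $T$ is a fundamental parallelogram whose boundary avoids the singularities, then $-\frac{1}{2}\operatorname{Im}\int_{\partial T} L\, d\bar{L} = \frac{1}{2}\operatorname{Im}(\bar\chi_1 \chi_2 - \chi_1 \bar\chi_2)$. -/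
/-- The line integral `∫ L dL̄` along the segment from `A` to `A + w`. -/
noncomputable def sideIntegral (L : ℂ → ℂ) (A w : ℂ) : ℂ :=
  ∫ t in (0:ℝ)..1,
    L (A + t * w) * (starRingEnd ℂ) (deriv (fun s : ℝ => L (A + s * w)) t)

/-!
Translating a side of the parallelogram by a period `v` adds the constant `χ` to `L` along it,
so by the fundamental theorem of calculus the side integral changes by
`χ · conj (L(A + w) - L A)`.
For the side parallel to the other period `w` this increment is `χ · conj χ_w`, and the two pairs
of opposite sides contribute `χ₁ χ̄₂ - χ₂ χ̄₁`, a purely imaginary number.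
-/

open Set intervalIntegral

section Segment

variable {L : ℂ → ℂ} {U : Set ℂ} {A w : ℂ}

theorem hasDerivAt_comp_segment {t : ℝ} (hL : DifferentiableAt ℂ L (A + t * w)) :
    HasDerivAt (fun s : ℝ => L (A + s * w)) (deriv L (A + t * w) * w) t := by
  have hline : HasDerivAt (fun z : ℂ => A + z * w) w t := by
    simpa using ((hasDerivAt_id (t : ℂ)).mul_const w).const_add A
  exact (hL.hasDerivAt.comp (t : ℂ) hline).comp_ofReal

variable (hU : IsOpen U) (hL : DifferentiableOn ℂ L U)
  (hseg : MapsTo (fun t : ℝ => A + t * w) (Icc 0 1) U)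
include hU hL hseg

theorem differentiableAt_comp_segment {t : ℝ} (ht : t ∈ Icc (0:ℝ) 1) :
    DifferentiableAt ℝ (fun s : ℝ => L (A + s * w)) t :=
  (hasDerivAt_comp_segment (hL.differentiableAt (hU.mem_nhds (hseg ht)))).differentiableAt

theorem continuousOn_deriv_comp_segment :
    ContinuousOn (deriv fun s : ℝ => L (A + s * w)) (Icc 0 1) := by
  have hderivL : ContinuousOn (deriv L) U := (hL.analyticOnNhd hU).deriv.continuousOn
  refine ContinuousOn.congr (f := fun t : ℝ => deriv L (A + t * w) * w)
    ((hderivL.comp (by fun_prop) hseg).mul continuousOn_const) fun t ht => ?_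
  exact (hasDerivAt_comp_segment (hL.differentiableAt (hU.mem_nhds (hseg ht)))).deriv

theorem integral_deriv_comp_segment :
    ∫ t in (0:ℝ)..1, deriv (fun s : ℝ => L (A + s * w)) t = L (A + w) - L A := by
  rw [integral_deriv_eq_sub]
  · simp
  · intro t ht
    exact differentiableAt_comp_segment hU hL hseg (uIcc_of_le (zero_le_one' ℝ) ▸ ht)
  · exact (continuousOn_deriv_comp_segment hU hL hseg).intervalIntegrable_of_Icc (zero_le_one' ℝ)

theorem sideIntegral_add_const (c : ℂ) :
    sideIntegral (fun z => L z + c) A w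
      = sideIntegral L A w + c * (starRingEnd ℂ) (L (A + w) - L A) := by
  have hderiv := continuousOn_deriv_comp_segment hU hL hseg
  have hL_seg : ContinuousOn (fun t : ℝ => L (A + t * w)) (Icc 0 1) := fun t ht =>
    (differentiableAt_comp_segment hU hL hseg ht).continuousAt.continuousWithinAt
  have hconj : IntervalIntegrable
      (fun t => (starRingEnd ℂ) (deriv (fun s : ℝ => L (A + s * w)) t))
      MeasureTheory.volume 0 1 :=
    (Complex.continuous_conj.comp_continuousOn hderiv).intervalIntegrable_of_Icc zero_le_one
  have hmain : IntervalIntegrable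
      (fun t => L (A + t * w) * (starRingEnd ℂ) (deriv (fun s : ℝ => L (A + s * w)) t))
      MeasureTheory.volume 0 1 :=
    (hL_seg.mul (Complex.continuous_conj.comp_continuousOn hderiv)).intervalIntegrable_of_Icc
      zero_le_one
  calc sideIntegral (fun z => L z + c) A w
      = ∫ t in (0:ℝ)..1,
          (L (A + t * w) * (starRingEnd ℂ) (deriv (fun s : ℝ => L (A + s * w)) t)
          + c * (starRingEnd ℂ) (deriv (fun s : ℝ => L (A + s * w)) t)) := by
        simp only [sideIntegral, deriv_add_const', add_mul]
    _ = sideIntegral L A w + c * (starRingEnd ℂ) (L (A + w) - L A) := by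
        rw [integral_add hmain (hconj.const_mul c), intervalIntegral.integral_const_mul,
          intervalIntegral_conj, integral_deriv_comp_segment hU hL hseg, sideIntegral]

end Segment

theorem sideIntegral_add_left (L : ℂ → ℂ) (A v w : ℂ) :
    sideIntegral L (A + v) w = sideIntegral (fun z => L (z + v)) A w := by
  simp only [sideIntegral, add_right_comm A v]

theorem sideIntegral_add_period {L : ℂ → ℂ} {U : Set ℂ} {A v w χ : ℂ}
    (hU : IsOpen U) (hL : DifferentiableOn ℂ L U)
    (hseg : MapsTo (fun t : ℝ => A + t * w) (Icc 0 1) U) (hper : ∀ z, L (z + v) - L z = χ) :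
    sideIntegral L (A + v) w = sideIntegral L A w + χ * (starRingEnd ℂ) (L (A + w) - L A) := by
  have hshift : (fun z => L (z + v)) = fun z => L z + χ := funext fun z => by
    rw [← hper z, add_sub_cancel]
  rw [sideIntegral_add_left, hshift, sideIntegral_add_const hU hL hseg]

theorem boundary_integral_quasi_periodic_general
    (L : ℂ → ℂ) (S : Set ℂ) (hS : S.Finite)
    (hL : DifferentiableOn ℂ L Sᶜ)
    (ω₁ ω₂ : ℂ)
    (χ₁ χ₂ : ℂ)
    (hper₁ : ∀ z : ℂ, L (z + ω₁) - L z = χ₁)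
    (hper₂ : ∀ z : ℂ, L (z + ω₂) - L z = χ₂)
    (z₀ : ℂ)
    (havoid : ∀ t ∈ Set.Icc (0:ℝ) 1,
      z₀ + t * ω₁ ∉ S ∧ z₀ + t * ω₂ ∉ S ∧
      z₀ + ω₂ + t * ω₁ ∉ S ∧ z₀ + ω₁ + t * ω₂ ∉ S) :
    -(1 / 2) * (sideIntegral L z₀ ω₁ + sideIntegral L (z₀ + ω₁) ω₂
        - sideIntegral L (z₀ + ω₂) ω₁ - sideIntegral L z₀ ω₂).im =
      (1 / 2) * ((starRingEnd ℂ) χ₁ * χ₂ - χ₁ * (starRingEnd ℂ) χ₂).im := by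
  have hU : IsOpen Sᶜ := hS.isClosed.isOpen_compl
  have hside₁ := sideIntegral_add_period hU hL (fun t ht => (havoid t ht).1) hper₂
  have hside₂ := sideIntegral_add_period hU hL (fun t ht => (havoid t ht).2.1) hper₁
  rw [hside₁, hside₂, hper₁, hper₂]
  simp only [Complex.sub_im, Complex.add_im, Complex.mul_im, Complex.conj_re, Complex.conj_im]
  ring

/-- For a quasi-periodic `L`, holomorphic outside a finite set, the boundary
integral `-½ Im ∫_{∂T} L dL̄` over a fundamental parallelogram `T` (with
vertex `z₀` and sides `ω₁, ω₂`, boundary avoiding the singularities) equals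
`½ Im(χ̄₁χ₂ - χ₁χ̄₂)`. -/
theorem boundary_integral_quasi_periodic
    (L : ℂ → ℂ) (S : Set ℂ) (hS : S.Finite)
    (hL : DifferentiableOn ℂ L Sᶜ)
    (ω₁ ω₂ : ℂ) (hindep : 0 < (ω₂ / ω₁).im)
    (χ₁ χ₂ : ℂ)
    (hper₁ : ∀ z : ℂ, L (z + ω₁) - L z = χ₁)
    (hper₂ : ∀ z : ℂ, L (z + ω₂) - L z = χ₂)
    (z₀ : ℂ)
    (havoid : ∀ t ∈ Set.Icc (0:ℝ) 1,
      z₀ + t * ω₁ ∉ S ∧ z₀ + t * ω₂ ∉ S ∧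
      z₀ + ω₂ + t * ω₁ ∉ S ∧ z₀ + ω₁ + t * ω₂ ∉ S) :
    -(1 / 2) * (sideIntegral L z₀ ω₁ + sideIntegral L (z₀ + ω₁) ω₂
        - sideIntegral L (z₀ + ω₂) ω₁ - sideIntegral L z₀ ω₂).im =
      (1 / 2) * ((starRingEnd ℂ) χ₁ * χ₂ - χ₁ * (starRingEnd ℂ) χ₂).im :=
  boundary_integral_quasi_periodic_general L S hS hL ω₁ ω₂ χ₁ χ₂ hper₁ hper₂ z₀ havoid
end

section
/- The Lamé polynomial $\ell_2(B) = \frac{4}{81}(B^2 - 3 g_2)(B + 3e_1)(B + 3e_2)(B + 3e_3)$, where $e_1, e_2, e_3$ are the distinct roots of $4x^3 - g_2 x - g_3$, has a multiple root if and only if $g_2 = 0$. -/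
/-!
Write `ℓ₂ = (4/81) ∏ (X - a)` over the multiset `{s, -s, -3e₁, -3e₂, -3e₃}`, where `s² = 3g₂`.
A common zero of `ℓ₂` and `ℓ₂'` is a root of multiplicity at least two, i.e. a repeated entry
of this multiset. The `-3eᵢ` are distinct, and `±s = -3e₁` would force
`0 = g₂ - 3e₁² = (e₂ - e₃)²`; so the only possible coincidence is `s = -s`, i.e. `g₂ = 0`.
-/

open Polynomial

theorem Polynomial.exists_isRoot_derivative_iff_not_nodup_roots {R : Type*} [CommRing R]
    [IsDomain R] {p : R[X]} (hp : p ≠ 0) :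
    (∃ t, p.IsRoot t ∧ p.derivative.IsRoot t) ↔ ¬ p.roots.Nodup := by
  classical
  simp only [Multiset.nodup_iff_count_le_one, count_roots, not_forall, not_le,
    one_lt_rootMultiplicity_iff_isRoot hp]

theorem neg_four_mul_sigma2_sub_three_mul_sq {R : Type*} [CommRing R] {e₁ e₂ e₃ : R}
    (hsum : e₁ + e₂ + e₃ = 0) :
    -4 * (e₁ * e₂ + e₁ * e₃ + e₂ * e₃) - 3 * e₁ ^ 2 = (e₂ - e₃) ^ 2 := by
  linear_combination -(3 * e₁ + e₂ + e₃) * hsum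

section
variable {R : Type*} [CommRing R] [IsDomain R] {e₁ e₂ e₃ g₂ s : R}

theorem sq_ne_sq_three_mul [NeZero (3 : R)] (hsum : e₁ + e₂ + e₃ = 0) (h23 : e₂ ≠ e₃)
    (hg₂ : g₂ = -4 * (e₁ * e₂ + e₁ * e₃ + e₂ * e₃)) (hs : s ^ 2 = 3 * g₂) :
    s ^ 2 ≠ (3 * e₁) ^ 2 := by
  intro h
  have : 3 * (e₂ - e₃) ^ 2 = 0 := by
    linear_combination -3 * neg_four_mul_sigma2_sub_three_mul_sq hsum + h - hs - 3 * hg₂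
  simp_all [sub_eq_zero]

theorem lame_roots_nodup_iff [NeZero (2 : R)] [NeZero (3 : R)] (hsum : e₁ + e₂ + e₃ = 0)
    (h12 : e₁ ≠ e₂) (h13 : e₁ ≠ e₃) (h23 : e₂ ≠ e₃)
    (hg₂ : g₂ = -4 * (e₁ * e₂ + e₁ * e₃ + e₂ * e₃)) (hs : s ^ 2 = 3 * g₂) :
    ({s, -s, -3 * e₁, -3 * e₂, -3 * e₃} : Multiset R).Nodup ↔ g₂ ≠ 0 := by
  have h1 := sq_ne_sq_three_mul hsum h23 hg₂ hs
  have h2 := sq_ne_sq_three_mul (e₁ := e₂) (by linear_combination hsum) h13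
    (by rw [hg₂]; ring) hs
  have h3 := sq_ne_sq_three_mul (e₁ := e₃) (by linear_combination hsum) h12
    (by rw [hg₂]; ring) hs
  simp only [ne_eq, sq_eq_sq_iff_eq_or_eq_neg, not_or] at h1 h2 h3
  have hs0 : s = -s ↔ g₂ = 0 := by
    rw [eq_neg_iff_add_eq_zero, ← two_mul, mul_eq_zero, or_iff_right two_ne_zero,
      ← pow_eq_zero_iff two_ne_zero, hs, mul_eq_zero, or_iff_right three_ne_zero]
  simp [hs0, h1, h2, h3, h12, h13, h23, three_ne_zero]

end

theorem lame_poly_two_multiple_root_iff_general (e₁ e₂ e₃ g₂ : ℂ)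
    (hsum : e₁ + e₂ + e₃ = 0)
    (h12 : e₁ ≠ e₂) (h13 : e₁ ≠ e₃) (h23 : e₂ ≠ e₃)
    (hg₂ : g₂ = -4 * (e₁ * e₂ + e₁ * e₃ + e₂ * e₃)) :
    (∃ B : ℂ,
        (fun X : ℂ => (4 / 81) * (X ^ 2 - 3 * g₂) * (X + 3 * e₁) * (X + 3 * e₂)
            * (X + 3 * e₃)) B = 0 ∧
        deriv (fun X : ℂ => (4 / 81) * (X ^ 2 - 3 * g₂) * (X + 3 * e₁)
            * (X + 3 * e₂) * (X + 3 * e₃)) B = 0)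
      ↔ g₂ = 0 := by
  obtain ⟨s, hs⟩ : ∃ s : ℂ, s ^ 2 = 3 * g₂ := IsAlgClosed.exists_pow_nat_eq _ two_pos
  set p : ℂ[X] := C (4 / 81) *
    (({s, -s, -3 * e₁, -3 * e₂, -3 * e₃} : Multiset ℂ).map fun a => X - C a).prod
  have hp : (fun X : ℂ => (4 / 81) * (X ^ 2 - 3 * g₂) * (X + 3 * e₁) * (X + 3 * e₂)
      * (X + 3 * e₃)) = fun x => p.eval x := by
    funext x
    simp only [p, eval_mul, eval_C, Multiset.insert_eq_cons, Multiset.map_cons,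
      Multiset.prod_cons, Multiset.map_singleton, Multiset.prod_singleton, eval_sub, eval_X]
    linear_combination (4 / 81 : ℂ) * (x + 3 * e₁) * (x + 3 * e₂) * (x + 3 * e₃) * hs
  have hp0 : p ≠ 0 := mul_ne_zero (by simp) (monic_multiset_prod_of_monic _ _
    fun a _ => monic_X_sub_C a).ne_zero
  have hroots : p.roots = {s, -s, -3 * e₁, -3 * e₂, -3 * e₃} := by
    rw [roots_C_mul _ (by norm_num), roots_multiset_prod_X_sub_C]
  rw [hp]
  simp only [Polynomial.deriv, ← IsRoot.def]
  rw [exists_isRoot_derivative_iff_not_nodup_roots hp0, hroots,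
    lame_roots_nodup_iff hsum h12 h13 h23 hg₂ hs, not_not]

/-- The Lamé polynomial `ℓ₂(B) = (4/81)(B² - 3g₂)(B + 3e₁)(B + 3e₂)(B + 3e₃)`
(for pairwise distinct `e₁, e₂, e₃` with `e₁ + e₂ + e₃ = 0`) has a multiple
root if and only if `g₂ = 0`. -/
theorem lame_poly_two_multiple_root_iff (e₁ e₂ e₃ g₂ g₃ : ℂ)
    (hsum : e₁ + e₂ + e₃ = 0)
    (h12 : e₁ ≠ e₂) (h13 : e₁ ≠ e₃) (h23 : e₂ ≠ e₃)
    (hg₂ : g₂ = -4 * (e₁ * e₂ + e₁ * e₃ + e₂ * e₃))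
    (hg₃ : g₃ = 4 * (e₁ * e₂ * e₃)) :
    (∃ B : ℂ,
        (fun X : ℂ => (4 / 81) * (X ^ 2 - 3 * g₂) * (X + 3 * e₁) * (X + 3 * e₂)
            * (X + 3 * e₃)) B = 0 ∧
        deriv (fun X : ℂ => (4 / 81) * (X ^ 2 - 3 * g₂) * (X + 3 * e₁)
            * (X + 3 * e₂) * (X + 3 * e₃)) B = 0)
      ↔ g₂ = 0 :=
  lame_poly_two_multiple_root_iff_general e₁ e₂ e₃ g₂ hsum h12 h13 h23 hg₂
end
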